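/- Let C_{2n+1} be an odd cycle graph on vertex set V = {x_1,...,x_{2n+1}}. Then the colon ideal (J(C_{2n+1})^2 : x_V) equals the maximal ideal p_V = (x_1,...,x_{2n+1}), where x_V is the product of all vertices. -/

import Mathlib

open MvPolynomial

noncomputable section

/-- A finite simple hypergraph on a vertex set `V`: edges are nonempty subsets of `V`
forming an antichain (a clutter). -/
structure Hypergraph' (σ : Type*) where
  V : Finset σ
  E : Finset (Finset σ)
  edge_sub : ∀ e ∈ E, e ⊆ V
  edge_nonempty : ∀ e ∈ E, e.Nonempty
  simple : ∀ e ∈ E, ∀ f ∈ E, e ⊆ f → e = f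

/-- The prime ideal generated by the variables indexed by `e`. -/
def primeOf {σ : Type*} (K : Type*) [Field K] (e : Finset σ) : Ideal (MvPolynomial σ K) :=
  Ideal.span ((fun i => (X i : MvPolynomial σ K)) '' e)

/-- The cover ideal of a set of edges: the intersection of the edge primes. -/
def coverIdeal {σ : Type*} (K : Type*) [Field K] (E : Finset (Finset σ)) :
    Ideal (MvPolynomial σ K) :=
  ⨅ e ∈ E, primeOf K e

/-- The squarefree monomial supported on `T`. -/
def xU {σ : Type*} (K : Type*) [Field K] (T : Finset σ) : MvPolynomial σ K :=
  ∏ i ∈ T, X i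

/-- The edge set of the cycle graph on `Fin (2n+1)` (with cyclic successor edges). -/
def cycleEdges (n : ℕ) : Finset (Finset (Fin (2 * n + 1))) :=
  Finset.univ.image (fun i => ({i, i + 1} : Finset (Fin (2 * n + 1))))

/-!
Every vertex cover of `C_{2n+1}` has at least `n + 1` vertices, so `J ⊆ 𝔪^(n+1)` and
`J^2 ⊆ 𝔪^(2n+2)`, where `𝔪 = (x_1, …, x_{2n+1})`; the monomial `x_V` has degree `2n+1`, so it is
not in `J^2` and the colon ideal is proper. Conversely, for each vertex `j`, the vertices at even
distance from `j` along the cycle, and those at odd distance together with `j`, form two vertex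
covers `A`, `B` with `A ∪ B = V` and `A ∩ B = {j}`, so `x_j x_V = x_A x_B ∈ J^2`. As `𝔪` is
maximal, the colon ideal is `𝔪`.
-/

open Finset

namespace MvPolynomial

variable {σ K : Type*} [Field K]

theorem idealOfVars_eq_ker_constantCoeff {R : Type*} [CommRing R] :
    idealOfVars σ R = RingHom.ker (constantCoeff : MvPolynomial σ R →+* R) := by
  ext p
  rw [← pow_one (idealOfVars σ R), mem_pow_idealOfVars_iff', RingHom.mem_ker, constantCoeff_eq]
  simp only [Nat.lt_one_iff, Finsupp.degree_eq_zero_iff, forall_eq]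

theorem isMaximal_idealOfVars : (idealOfVars σ K).IsMaximal := by
  rw [idealOfVars_eq_ker_constantCoeff]
  exact RingHom.ker_isMaximal_of_surjective _ fun c => ⟨C c, constantCoeff_C σ c⟩

theorem primeOf_univ [Fintype σ] : primeOf K (univ : Finset σ) = idealOfVars σ K := by
  rw [primeOf, coe_univ, Set.image_univ]

theorem xU_eq_monomial (T : Finset σ) :
    xU K T = monomial (∑ i ∈ T, Finsupp.single i 1) 1 := by
  rw [xU, monomial_sum_one]
  rfl

theorem xU_mem_pow_idealOfVars_iff {T : Finset σ} {k : ℕ} :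
    xU K T ∈ idealOfVars σ K ^ k ↔ k ≤ #T := by
  rw [xU_eq_monomial, monomial_mem_pow_idealOfVars_iff _ _ one_ne_zero, map_sum]
  simp

end MvPolynomial

theorem Finsupp.card_support_le_degree {σ : Type*} (d : σ →₀ ℕ) : #d.support ≤ d.degree :=
  calc #d.support = ∑ _ ∈ d.support, 1 := card_eq_sum_ones _
    _ ≤ ∑ i ∈ d.support, d i :=
      Finset.sum_le_sum fun _ hi => Nat.one_le_iff_ne_zero.mpr (Finsupp.mem_support_iff.mp hi)

def IsVertexCover {σ : Type*} (E : Finset (Finset σ)) (C : Finset σ) : Prop :=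
  ∀ e ∈ E, ∃ i ∈ e, i ∈ C

section CoverIdeal

open MvPolynomial

variable {σ K : Type*} [Field K] {E : Finset (Finset σ)}

theorem xU_mem_coverIdeal {C : Finset σ} (hC : IsVertexCover E C) :
    xU K C ∈ coverIdeal K E := by
  classical
  simp only [coverIdeal, Ideal.mem_iInf]
  intro e he
  obtain ⟨i, hie, hiC⟩ := hC e he
  rw [xU, ← mul_prod_erase _ _ hiC]
  exact Ideal.mul_mem_right _ _ (Ideal.subset_span ⟨i, hie, rfl⟩)

theorem isVertexCover_support_of_mem_coverIdeal {f : MvPolynomial σ K}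
    (hf : f ∈ coverIdeal K E) {m : σ →₀ ℕ} (hm : m ∈ f.support) : IsVertexCover E m.support := by
  intro e he
  have hfe : f ∈ primeOf K e := by
    simp only [coverIdeal, Ideal.mem_iInf] at hf
    exact hf e he
  obtain ⟨i, hie, hmi⟩ := mem_ideal_span_X_image.mp hfe m hm
  exact ⟨i, hie, Finsupp.mem_support_iff.mpr hmi⟩

theorem coverIdeal_le_pow_idealOfVars {k : ℕ} (hk : ∀ C, IsVertexCover E C → k ≤ #C) :
    coverIdeal K E ≤ idealOfVars σ K ^ k := fun f hf =>
  (mem_pow_idealOfVars_iff k f).mpr fun m hm =>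
    (hk _ (isVertexCover_support_of_mem_coverIdeal hf hm)).trans m.card_support_le_degree

theorem xU_univ_notMem_coverIdeal_sq [Fintype σ] {k : ℕ}
    (hk : ∀ C, IsVertexCover E C → k ≤ #C) (hσ : Fintype.card σ < 2 * k) :
    xU K univ ∉ coverIdeal K E ^ 2 := fun h => by
  have h' : xU K univ ∈ idealOfVars σ K ^ (2 * k) := by
    rw [mul_comm, pow_mul]
    exact Ideal.pow_right_mono (coverIdeal_le_pow_idealOfVars hk) 2 h
  rw [xU_mem_pow_idealOfVars_iff, card_univ] at h'
  omega

theorem X_mul_xU_univ_mem_coverIdeal_sq [Fintype σ] [DecidableEq σ] {A B : Finset σ} {j : σ}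
    (hA : IsVertexCover E A) (hB : IsVertexCover E B) (hunion : A ∪ B = univ)
    (hinter : A ∩ B = {j}) : X j * xU K univ ∈ coverIdeal K E ^ 2 := by
  have hsplit : X j * xU K univ = xU K A * xU K B := by
    rw [xU, xU, xU, ← hunion, mul_comm, ← prod_singleton (fun i => (X i : MvPolynomial σ K)) j,
      ← hinter, prod_union_inter]
  rw [hsplit, sq]
  exact Ideal.mul_mem_mul (xU_mem_coverIdeal hA) (xU_mem_coverIdeal hB)

theorem colon_sq_coverIdeal_eq_idealOfVars [Fintype σ] [DecidableEq σ] {k : ℕ}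
    (hk : ∀ C, IsVertexCover E C → k ≤ #C) (hσ : Fintype.card σ < 2 * k)
    (hsplit : ∀ j, ∃ A B, IsVertexCover E A ∧ IsVertexCover E B ∧ A ∪ B = univ ∧ A ∩ B = {j}) :
    (coverIdeal K E ^ 2).colon (Ideal.span {xU K (univ : Finset σ)}) = idealOfVars σ K := by
  refine (isMaximal_idealOfVars.eq_of_le ?_ ?_).symm
  · rw [Ne, Submodule.colon_eq_top_iff_subset, SetLike.coe_subset_coe,
      Ideal.span_singleton_le_iff_mem]
    exact xU_univ_notMem_coverIdeal_sq hk hσ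
  · rw [idealOfVars, Ideal.span_le]
    rintro _ ⟨j, rfl⟩
    obtain ⟨A, B, hA, hB, hunion, hinter⟩ := hsplit j
    exact Ideal.mem_colon_span_singleton.mpr (X_mul_xU_univ_mem_coverIdeal_sq hA hB hunion hinter)

end CoverIdeal

theorem le_two_mul_card_of_forall_mem_or_add_one_mem {m : ℕ} [NeZero m] {S : Finset (Fin m)}
    (hS : ∀ i, i ∈ S ∨ i + 1 ∈ S) : m ≤ 2 * #S := by
  classical
  have hcover : (univ : Finset (Fin m)) ⊆ S ∪ S.image (· - 1) := fun i _ => by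
    rcases hS i with h | h
    · exact mem_union_left _ h
    · exact mem_union_right _ (mem_image.mpr ⟨i + 1, h, add_sub_cancel_right i 1⟩)
  calc m = #(univ : Finset (Fin m)) := by simp
    _ ≤ #(S ∪ S.image (· - 1)) := card_le_card hcover
    _ ≤ #S + #S := (card_union_le _ _).trans (Nat.add_le_add_left card_image_le _)
    _ = 2 * #S := (two_mul _).symm

theorem Fin.even_val_or_even_val_add_one {m : ℕ} (k : Fin (m + 1)) :
    Even k.val ∨ Even (k + 1).val := by
  rw [Fin.val_add_one]
  split_ifs with h
  · exact Or.inr (by simp)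
  · rcases Nat.even_or_odd k.val with hk | hk
    · exact Or.inl hk
    · exact Or.inr hk.add_one

theorem Fin.eq_zero_or_odd_val_or_eq_zero_or_odd_val_add_one {m : ℕ} (k : Fin (m + 1)) :
    (k = 0 ∨ Odd k.val) ∨ (k + 1 = 0 ∨ Odd (k + 1).val) := by
  rw [Fin.val_add_one]
  split_ifs with h
  · exact Or.inr (Or.inl (by simp [h]))
  · rcases Nat.even_or_odd k.val with hk | hk
    · exact Or.inr (Or.inr hk.add_one)
    · exact Or.inl (Or.inr hk)

section OddCycle

variable {n : ℕ}

theorem isVertexCover_cycleEdges_iff {C : Finset (Fin (2 * n + 1))} :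
    IsVertexCover (cycleEdges n) C ↔ ∀ i, i ∈ C ∨ i + 1 ∈ C := by
  simp [IsVertexCover, cycleEdges]

theorem isVertexCover_cycleEdges_filter_sub {P : Fin (2 * n + 1) → Prop} [DecidablePred P]
    (hP : ∀ k, P k ∨ P (k + 1)) (j : Fin (2 * n + 1)) :
    IsVertexCover (cycleEdges n) (univ.filter fun i => P (i - j)) := by
  rw [isVertexCover_cycleEdges_iff]
  intro i
  simpa [sub_add_eq_add_sub] using hP (i - j)

theorem exists_cycle_covers_inter_eq_singleton (j : Fin (2 * n + 1)) :
    ∃ A B, IsVertexCover (cycleEdges n) A ∧ IsVertexCover (cycleEdges n) B ∧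
      A ∪ B = univ ∧ A ∩ B = {j} := by
  refine ⟨_, _, isVertexCover_cycleEdges_filter_sub Fin.even_val_or_even_val_add_one j,
    isVertexCover_cycleEdges_filter_sub
      Fin.eq_zero_or_odd_val_or_eq_zero_or_odd_val_add_one j, ?_, ?_⟩
  · ext i
    simpa using ((i - j).val.even_or_odd).imp_right Or.inr
  · ext i
    simp only [mem_inter, mem_filter, mem_univ, true_and, mem_singleton, sub_eq_zero]
    constructor
    · rintro ⟨he, h | ho⟩
      · exact h
      · exact absurd he (Nat.not_even_iff_odd.mpr ho)
    · rintro rfl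
      simp

end OddCycle

theorem colon_sq_coverIdeal_oddCycle_general (K : Type*) [Field K] (n : ℕ) :
    ((coverIdeal K (cycleEdges n)) ^ 2).colon
        (Ideal.span {xU K (Finset.univ : Finset (Fin (2 * n + 1)))}) =
      primeOf K (Finset.univ : Finset (Fin (2 * n + 1))) := by
  have hcard : ∀ C, IsVertexCover (cycleEdges n) C → n + 1 ≤ #C := fun C hC => by
    have := le_two_mul_card_of_forall_mem_or_add_one_mem (isVertexCover_cycleEdges_iff.mp hC)
    omega
  rw [primeOf_univ]
  exact colon_sq_coverIdeal_eq_idealOfVars hcard (by rw [Fintype.card_fin]; omega)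
    exists_cycle_covers_inter_eq_singleton

/-- For the odd cycle `C_{2n+1}`, `(J(C_{2n+1})^2 : x_V) = p_V`,
the maximal ideal generated by all the variables. -/
theorem colon_sq_coverIdeal_oddCycle (K : Type*) [Field K] (n : ℕ) (hn : 0 < n) :
    ((coverIdeal K (cycleEdges n)) ^ 2).colon
        (Ideal.span {xU K (Finset.univ : Finset (Fin (2 * n + 1)))}) =
      primeOf K (Finset.univ : Finset (Fin (2 * n + 1))) :=
  colon_sq_coverIdeal_oddCycle_general K n
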